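/- arXiv:2603.18434 — 2 statements merged into one kernel-verified Lean document; each statement's English description precedes it below -/
import Mathlib

section
/- Pollard's virial theorem, forward direction: let q(t) be a solution of Newton's N-body equations defined for all t ∈ ℝ with total energy E, and suppose I(t)/t² → 0 as t → +∞ and as t → −∞. Then the time averages ⟨K⟩ = lim_{T→∞} (1/(2T))∫_{−T}^{T} K(t) dt and ⟨U⟩ = lim_{T→∞} (1/(2T))∫_{−T}^{T} U(q(t)) dt both exist as finite limits and satisfy the virial equation: 2⟨K⟩ = ⟨U⟩, ⟨U⟩ = −2E, and ⟨K⟩ = −E. -/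
open Finset Filter MeasureTheory
open scoped RealInnerProductSpace

noncomputable section

/-- Configuration space of `N` bodies in `ℝ³`. -/
abbrev Config (N : ℕ) := Fin N → EuclideanSpace ℝ (Fin 3)

/-- A configuration is collision-free if all bodies occupy distinct positions. -/
def CollisionFree {N : ℕ} (q : Config N) : Prop :=
  ∀ a b : Fin N, a ≠ b → q a ≠ q b

/-- The Newtonian potential `U(q) = G ∑_{a<b} m_a m_b / |q_a - q_b|`. -/
def potU {N : ℕ} (G : ℝ) (m : Fin N → ℝ) (q : Config N) : ℝ :=
  G * ∑ a : Fin N, ∑ b : Fin N, if a < b then m a * m b / ‖q a - q b‖ else 0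

/-- Kinetic energy `K = (1/2) ∑_a m_a |v_a|²`. -/
def kinE {N : ℕ} (m : Fin N → ℝ) (v : Config N) : ℝ :=
  (1 / 2) * ∑ a : Fin N, m a * ‖v a‖ ^ 2

/-- Moment of inertia `I = ∑_a m_a |q_a|²`. -/
def momI {N : ℕ} (m : Fin N → ℝ) (q : Config N) : ℝ :=
  ∑ a : Fin N, m a * ‖q a‖ ^ 2

/-- `q, v : ℝ → Config N` is a solution of Newton's N-body equations on `J`:
at each time in `J` the configuration is collision-free, `v` is the derivative
of `q`, and the acceleration satisfies
`m_a q̈_a = G ∑_{b ≠ a} m_a m_b (q_b - q_a)/|q_b - q_a|³`. -/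
def IsSolutionOn {N : ℕ} (G : ℝ) (m : Fin N → ℝ) (J : Set ℝ)
    (q v : ℝ → Config N) : Prop :=
  ∀ t ∈ J,
    CollisionFree (q t) ∧
    (∀ a, HasDerivAt (fun s => q s a) (v t a) t) ∧
    (∀ a, ∃ acc : EuclideanSpace ℝ (Fin 3),
      HasDerivAt (fun s => v s a) acc t ∧
      m a • acc = ∑ b ∈ univ.filter (fun b => b ≠ a),
        (G * m a * m b / ‖q t b - q t a‖ ^ 3) • (q t b - q t a))

/-! With `D = ∑ₐ mₐ ⟪qₐ, q̇ₐ⟫ = İ/2`, the Lagrange–Jacobi identity `Ḋ = 2K - U` and the energy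
relation `K - U = E` give `(D - 2Et)' = U ≥ 0`. Hence `J = I/2 - Et²` is convex with
`J' = D - 2Et`, and `J(t)/t² → -E` at both ends. For a convex function this growth
forces `J'(t)/t → -2E` as `t → ±∞`, so `⟨U⟩ = lim (J'(T) - J'(-T)) / (2T) = -2E`,
and `⟨K⟩ = ⟨U⟩ + E = -E`. -/

section ConvexGrowth

variable {f φ : ℝ → ℝ}

theorem mul_sub_le_sub_of_hasDerivAt_of_monotone (hf : ∀ t, HasDerivAt f (φ t) t)
    (hφ : Monotone φ) (x y : ℝ) : φ x * (y - x) ≤ f y - f x := by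
  have hcont : Continuous f := continuous_iff_continuousAt.2 fun t => (hf t).continuousAt
  rcases lt_trichotomy x y with hxy | rfl | hyx
  · obtain ⟨ξ, hξ, hslope⟩ := exists_hasDerivAt_eq_slope f φ hxy hcont.continuousOn
      fun t _ => hf t
    rw [eq_div_iff (sub_ne_zero.2 hxy.ne')] at hslope
    rw [← hslope]
    exact mul_le_mul_of_nonneg_right (hφ hξ.1.le) (sub_nonneg.2 hxy.le)
  · simp
  · obtain ⟨ξ, hξ, hslope⟩ := exists_hasDerivAt_eq_slope f φ hyx hcont.continuousOn
      fun t _ => hf t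
    rw [eq_div_iff (sub_ne_zero.2 hyx.ne')] at hslope
    nlinarith [mul_le_mul_of_nonneg_right (hφ hξ.2.le) (sub_nonneg.2 hyx.le)]

/-- For a convex `f` with `f t / t² → c`, comparing `f'(t)` with the chord of `f` over
`[t, s t]` squeezes `f'(t) / t` between `(s + 1) c` for `s` slightly above and below `1`. -/
theorem tendsto_div_atTop_of_tendsto_div_sq (hf : ∀ t, HasDerivAt f (φ t) t)
    (hφ : Monotone φ) {c : ℝ} (hc : Tendsto (fun t => f t / t ^ 2) atTop (nhds c)) :
    Tendsto (fun t => φ t / t) atTop (nhds (2 * c)) := by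
  have hchord : ∀ s, ∀ᶠ t in atTop, (s - 1) * (φ t / t) ≤ (f (s * t) - f t) / t ^ 2 := by
    intro s
    filter_upwards [eventually_gt_atTop 0] with t ht
    rw [le_div_iff₀ (by positivity)]
    have := mul_sub_le_sub_of_hasDerivAt_of_monotone hf hφ t (s * t)
    calc (s - 1) * (φ t / t) * t ^ 2 = φ t * (s * t - t) := by field_simp
      _ ≤ _ := this
  have hlim : ∀ s, 0 < s →
      Tendsto (fun t => (f (s * t) - f t) / t ^ 2) atTop (nhds ((s - 1) * ((s + 1) * c))) := by
    intro s hs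
    have h := ((hc.comp (tendsto_id.const_mul_atTop hs)).const_mul (s ^ 2)).sub hc
    rw [show s ^ 2 * c - c = (s - 1) * ((s + 1) * c) by ring] at h
    refine h.congr' ?_
    filter_upwards [eventually_ne_atTop 0] with t ht
    simp only [Function.comp_apply, id]
    field_simp
  have hcont : Continuous fun s : ℝ => (s + 1) * c := by fun_prop
  have hone : (1 + 1) * c = 2 * c := by ring
  refine tendsto_order.2 ⟨fun a ha => ?_, fun a ha => ?_⟩
  · obtain ⟨s, hsa, hs⟩ := (((hcont.tendsto 1).mono_left nhdsWithin_le_nhds).eventually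
      (lt_mem_nhds (hone ▸ ha))).and (Ioo_mem_nhdsLT one_pos) |>.exists
    have hs1 : s - 1 < 0 := by linarith [hs.2]
    filter_upwards [hchord s, (hlim s hs.1).eventually
      (gt_mem_nhds (mul_lt_mul_of_neg_left hsa hs1))] with t h₁ h₂
    exact lt_of_mul_lt_mul_of_nonpos_left (h₁.trans_lt h₂) hs1.le
  · obtain ⟨s, hsa, hs⟩ := (((hcont.tendsto 1).mono_left nhdsWithin_le_nhds).eventually
      (gt_mem_nhds (hone ▸ ha))).and (self_mem_nhdsWithin (s := Set.Ioi 1)) |>.exists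
    have hs1 : 0 < s - 1 := sub_pos.2 hs
    filter_upwards [hchord s, (hlim s (zero_lt_one.trans hs)).eventually
      (gt_mem_nhds (mul_lt_mul_of_pos_left hsa hs1))] with t h₁ h₂
    exact lt_of_mul_lt_mul_left (h₁.trans_lt h₂) hs1.le

theorem tendsto_div_atBot_of_tendsto_div_sq (hf : ∀ t, HasDerivAt f (φ t) t)
    (hφ : Monotone φ) {c : ℝ} (hc : Tendsto (fun t => f t / t ^ 2) atBot (nhds c)) :
    Tendsto (fun t => φ t / t) atBot (nhds (2 * c)) := by
  have hf' : ∀ t, HasDerivAt (fun s => f (-s)) (-φ (-t)) t := fun t => by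
    rw [← mul_neg_one]
    exact (hf (-t)).comp t (hasDerivAt_neg t)
  have hφ' : Monotone fun t => -φ (-t) := fun s t hst => neg_le_neg (hφ (neg_le_neg hst))
  have hc' : Tendsto (fun t => f (-t) / t ^ 2) atTop (nhds c) := by
    simpa [Function.comp_def] using hc.comp tendsto_neg_atTop_atBot
  have h := (tendsto_div_atTop_of_tendsto_div_sq hf' hφ' hc').comp tendsto_neg_atBot_atTop
  simpa [Function.comp_def, neg_div_neg_eq] using h

end ConvexGrowth

theorem tendsto_symmetricAverage_of_hasDerivAt {F f : ℝ → ℝ} (hF : ∀ t, HasDerivAt F (f t) t)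
    (hf : Continuous f) {L : ℝ} (htop : Tendsto (fun t => F t / t) atTop (nhds L))
    (hbot : Tendsto (fun t => F t / t) atBot (nhds L)) :
    Tendsto (fun T => (1 / (2 * T)) * ∫ t in (-T)..T, f t) atTop (nhds L) := by
  have h := (htop.add (hbot.comp tendsto_neg_atTop_atBot)).div_const 2
  rw [add_self_div_two] at h
  refine h.congr' ?_
  filter_upwards [eventually_ne_atTop 0] with T hT
  rw [intervalIntegral.integral_eq_sub_of_hasDerivAt (fun t _ => hF t) (hf.intervalIntegrable _ _)]
  simp only [Function.comp_apply]
  field_simp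
  ring

theorem symmetricAverage_add_const {f : ℝ → ℝ} (hf : Continuous f) (C : ℝ) {T : ℝ}
    (hT : T ≠ 0) :
    (1 / (2 * T)) * ∫ t in (-T)..T, (f t + C) = ((1 / (2 * T)) * ∫ t in (-T)..T, f t) + C := by
  rw [intervalIntegral.integral_add (hf.intervalIntegrable _ _) intervalIntegrable_const,
    intervalIntegral.integral_const, smul_eq_mul]
  field_simp
  ring

theorem tendsto_half_sub_mul_sq_div_sq {l : Filter ℝ} (hl : ∀ᶠ t in l, t ≠ 0) {I : ℝ → ℝ}
    (hI : Tendsto (fun t => I t / t ^ 2) l (nhds 0)) (E : ℝ) :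
    Tendsto (fun t => (I t / 2 - E * t ^ 2) / t ^ 2) l (nhds (-E)) := by
  refine ((hI.div_const 2).sub_const E).congr' ?_ |>.trans (by norm_num)
  filter_upwards [hl] with t ht
  field_simp

theorem Finset.sum_sum_ne_eq_sum_sum_lt {ι M : Type*} [Fintype ι] [LinearOrder ι]
    [AddCommMonoid M] (h : ι → ι → M) :
    ∑ a, ∑ b ∈ univ.filter (fun b => b ≠ a), h a b
      = ∑ a, ∑ b, if a < b then h a b + h b a else 0 := by
  have hsplit : ∀ a, ∑ b ∈ univ.filter (fun b => b ≠ a), h a b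
      = ∑ b, ((if a < b then h a b else 0) + if b < a then h a b else 0) := by
    intro a
    rw [Finset.sum_filter]
    refine Finset.sum_congr rfl fun b _ => ?_
    rcases lt_trichotomy a b with hab | rfl | hab
    · simp [hab, hab.ne', hab.not_gt]
    · simp
    · simp [hab, hab.ne, hab.not_gt]
  simp_rw [hsplit, Finset.sum_add_distrib]
  rw [Finset.sum_comm (f := fun a b => if b < a then h a b else 0), ← Finset.sum_add_distrib]
  refine Finset.sum_congr rfl fun a _ => ?_
  rw [← Finset.sum_add_distrib]
  exact Finset.sum_congr rfl fun b _ => by split_ifs <;> simp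

theorem inner_sub_right_add_inner_sub_right {E : Type*} [NormedAddCommGroup E]
    [InnerProductSpace ℝ E] (x y : E) :
    ⟪x, y - x⟫ + ⟪y, x - y⟫ = -‖x - y‖ ^ 2 := by
  rw [← neg_sub x y, inner_neg_right, ← real_inner_self_eq_norm_sq, inner_sub_left]
  ring

section NBody

variable {N : ℕ}

def newtonForce (G : ℝ) (m : Fin N → ℝ) (q : Config N) (a : Fin N) :
    EuclideanSpace ℝ (Fin 3) :=
  ∑ b ∈ univ.filter (fun b => b ≠ a), (G * m a * m b / ‖q b - q a‖ ^ 3) • (q b - q a)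

def dilation (m : Fin N → ℝ) (q v : Config N) : ℝ :=
  ∑ a, m a * ⟪q a, v a⟫

theorem potU_nonneg {G : ℝ} (hG : 0 ≤ G) {m : Fin N → ℝ} (hm : ∀ a, 0 ≤ m a) (q : Config N) :
    0 ≤ potU G m q :=
  mul_nonneg hG <| Finset.sum_nonneg fun a _ => Finset.sum_nonneg fun b _ => by
    split_ifs
    exacts [div_nonneg (mul_nonneg (hm a) (hm b)) (norm_nonneg _), le_rfl]

/-- Euler's identity for the potential, which is homogeneous of degree `-1`. -/
theorem sum_inner_newtonForce (G : ℝ) (m : Fin N → ℝ) (q : Config N) :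
    ∑ a, ⟪q a, newtonForce G m q a⟫ = -potU G m q := by
  simp only [newtonForce, inner_sum, real_inner_smul_right]
  rw [Finset.sum_sum_ne_eq_sum_sum_lt, potU, Finset.mul_sum, ← Finset.sum_neg_distrib]
  refine Finset.sum_congr rfl fun a _ => ?_
  rw [Finset.mul_sum, ← Finset.sum_neg_distrib]
  refine Finset.sum_congr rfl fun b _ => ?_
  split_ifs
  · have hpair := inner_sub_right_add_inner_sub_right (q a) (q b)
    rw [norm_sub_rev (q a) (q b)] at hpair ⊢
    set r := ‖q b - q a‖
    rcases eq_or_ne r 0 with hr | hr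
    · -- at a collision both sides vanish, since `x / 0 = 0`
      simp [hr]
    · rw [mul_right_comm G (m b), ← mul_add, hpair]
      field_simp
  · simp

theorem hasDerivAt_momI {m : Fin N → ℝ} {q : ℝ → Config N} {v : Config N} {t : ℝ}
    (hq : ∀ a, HasDerivAt (fun s => q s a) (v a) t) :
    HasDerivAt (fun s => momI m (q s)) (2 * dilation m (q t) v) t := by
  have hI : (fun s => momI m (q s)) = fun s => ∑ a, m a * ⟪q s a, q s a⟫ := by
    simp only [momI, real_inner_self_eq_norm_sq]
  rw [hI]
  refine (HasDerivAt.fun_sum fun a _ => ((hq a).inner ℝ (hq a)).const_mul (m a)).congr_deriv ?_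
  simp only [dilation, Finset.mul_sum, real_inner_comm (v _)]
  exact Finset.sum_congr rfl fun a _ => by ring

/-- The Lagrange–Jacobi identity `Ï = 4K - 2U`, in the form `(İ/2)' = 2K - U`. -/
theorem IsSolutionOn.hasDerivAt_dilation {G : ℝ} {m : Fin N → ℝ} {J : Set ℝ}
    {q v : ℝ → Config N} (hsol : IsSolutionOn G m J q v) {t : ℝ} (ht : t ∈ J) :
    HasDerivAt (fun s => dilation m (q s) (v s)) (2 * kinE m (v t) - potU G m (q t)) t := by
  obtain ⟨-, hq, hv⟩ := hsol t ht
  choose acc hacc hnewton using hv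
  refine (HasDerivAt.fun_sum fun a _ =>
    ((hq a).inner ℝ (hacc a)).const_mul (m a)).congr_deriv ?_
  have hforce : ∀ a, m a * ⟪q t a, acc a⟫ = ⟪q t a, newtonForce G m (q t) a⟫ := fun a => by
    rw [← real_inner_smul_right, hnewton a, newtonForce]
  simp only [mul_add, Finset.sum_add_distrib, hforce, sum_inner_newtonForce,
    real_inner_self_eq_norm_sq, kinE]
  ring

theorem IsSolutionOn.continuous_kinE {G : ℝ} {m : Fin N → ℝ} {q v : ℝ → Config N}
    (hsol : IsSolutionOn G m Set.univ q v) : Continuous fun t => kinE m (v t) := by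
  have hv : ∀ a, Continuous fun t => v t a := fun a =>
    continuous_iff_continuousAt.2 fun t =>
      (((hsol t trivial).2.2 a).choose_spec.1).continuousAt
  unfold kinE
  fun_prop

end NBody

theorem pollard_virial_forward_general
    (N : ℕ) (G : ℝ) (hG : 0 < G)
    (m : Fin N → ℝ) (hm : ∀ a, 0 < m a)
    (q v : ℝ → Config N)
    (hsol : IsSolutionOn G m Set.univ q v)
    (E : ℝ) (hE : ∀ t : ℝ, kinE m (v t) - potU G m (q t) = E)
    (hItop : Tendsto (fun t : ℝ => momI m (q t) / t ^ 2) atTop (nhds 0))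
    (hIbot : Tendsto (fun t : ℝ => momI m (q t) / t ^ 2) atBot (nhds 0)) :
    Tendsto (fun T : ℝ => (1 / (2 * T)) * ∫ t in (-T)..T, kinE m (v t))
      atTop (nhds (-E)) ∧
    Tendsto (fun T : ℝ => (1 / (2 * T)) * ∫ t in (-T)..T, potU G m (q t))
      atTop (nhds (-2 * E)) := by
  set J : ℝ → ℝ := fun t => momI m (q t) / 2 - E * t ^ 2
  set φ : ℝ → ℝ := fun t => dilation m (q t) (v t) - 2 * E * t
  have hJ : ∀ t, HasDerivAt J (φ t) t := fun t =>
    (((hasDerivAt_momI (hsol t trivial).2.1).div_const 2).sub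
      ((hasDerivAt_pow 2 t).const_mul E)).congr_deriv (by simp only [φ]; push_cast; ring)
  have hφ : ∀ t, HasDerivAt φ (potU G m (q t)) t := fun t =>
    ((hsol.hasDerivAt_dilation (Set.mem_univ t)).sub
      ((hasDerivAt_id t).const_mul (2 * E))).congr_deriv (by linarith [hE t])
  have hφ_mono : Monotone φ :=
    monotone_of_hasDerivAt_nonneg hφ fun t => potU_nonneg hG.le (fun a => (hm a).le) _
  have hKU : ∀ t, kinE m (v t) = potU G m (q t) + E := fun t => by linarith [hE t]
  have hU_cont : Continuous fun t => potU G m (q t) :=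
    (hsol.continuous_kinE.sub (continuous_const (y := E))).congr fun t => by
      simp only [Pi.sub_apply, hKU, add_sub_cancel_right]
  have hJ_top := tendsto_half_sub_mul_sq_div_sq (eventually_ne_atTop 0) hItop E
  have hJ_bot := tendsto_half_sub_mul_sq_div_sq (eventually_ne_atBot 0) hIbot E
  have hU := tendsto_symmetricAverage_of_hasDerivAt hφ hU_cont
    (tendsto_div_atTop_of_tendsto_div_sq hJ hφ_mono hJ_top)
    (tendsto_div_atBot_of_tendsto_div_sq hJ hφ_mono hJ_bot)
  refine ⟨?_, by simpa using hU⟩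
  have hK := hU.add_const E
  rw [show 2 * -E + E = -E by ring] at hK
  refine hK.congr' ?_
  filter_upwards [eventually_ne_atTop 0] with T hT
  simp only [hKU]
  exact (symmetricAverage_add_const hU_cont E hT).symm

/-- Pollard's virial theorem, forward direction: if a solution
defined for all time satisfies `I(t) = o(t²)` as `t → ±∞`, then the time
averages of `K` and `U` exist and satisfy the virial equation
`⟨K⟩ = -E` and `⟨U⟩ = -2E` (hence `2⟨K⟩ = ⟨U⟩`). -/
theorem pollard_virial_forward
    (N : ℕ) (hN : 2 ≤ N) (G : ℝ) (hG : 0 < G)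
    (m : Fin N → ℝ) (hm : ∀ a, 0 < m a)
    (q v : ℝ → Config N)
    (hsol : IsSolutionOn G m Set.univ q v)
    (E : ℝ) (hE : ∀ t : ℝ, kinE m (v t) - potU G m (q t) = E)
    (hItop : Tendsto (fun t : ℝ => momI m (q t) / t ^ 2) atTop (nhds 0))
    (hIbot : Tendsto (fun t : ℝ => momI m (q t) / t ^ 2) atBot (nhds 0)) :
    Tendsto (fun T : ℝ => (1 / (2 * T)) * ∫ t in (-T)..T, kinE m (v t))
      atTop (nhds (-E)) ∧
    Tendsto (fun T : ℝ => (1 / (2 * T)) * ∫ t in (-T)..T, potU G m (q t))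
      atTop (nhds (-2 * E)) :=
  pollard_virial_forward_general N G hG m hm q v hsol E hE hItop hIbot
end
end

section
/- Shrinking loops have shrinking JM length: fix h > 0 and let c : [0,1] → {collision-free configurations} be a C¹ closed curve. Then there exist constants C > 0 and λ₀ ∈ (0,1] such that for every λ ∈ (0, λ₀], the rescaled curve λc (given by s ↦ (λc_1(s), …, λc_N(s))) lies in the collision-free Hill region {U ≥ h} and its JM length satisfies L_h(λc) ≤ C·√λ. In particular the JM length of λc tends to 0 as λ → 0. -/
open Finset Filter MeasureTheory
open scoped RealInnerProductSpace

noncomputable section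

/-- The Jacobi–Maupertuis length at energy `-h` of a path `γ : [0,1] → Config N`:
`L_h(γ) = ∫₀¹ √(2(U(γ(s)) - h)) √(∑ m_a |γ_a'(s)|²) ds`. -/
def JMlength {N : ℕ} (G : ℝ) (m : Fin N → ℝ) (h : ℝ) (γ : ℝ → Config N) : ℝ :=
  ∫ s in (0:ℝ)..1, Real.sqrt (2 * (potU G m (γ s) - h)) *
    Real.sqrt (∑ a : Fin N, m a * ‖deriv (fun u => γ u a) s‖ ^ 2)

/-!
`U` is homogeneous of degree `-1`, so `U(λq) = U(q)/λ`: shrinking a collision-free loop pushes it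
into the Hill region `{U ≥ h}` once `λ ≤ min U / h`, while the first factor of the JM integrand grows
only like `λ^{-1/2}`. The velocity factor shrinks like `λ`, so the integrand, and with it the
length, is `O(√λ)` with constants given by `max U` and a bound on `|c'|` along the compact loop.
-/

open Set

section

variable {N : ℕ} {G : ℝ} {m : Fin N → ℝ}

theorem CollisionFree.smul {q : Config N} (hq : CollisionFree q) {lam : ℝ} (hlam : lam ≠ 0) :
    CollisionFree (lam • q) :=
  fun a b hab hq' => hq a b hab (smul_right_injective _ hlam hq')

theorem potU_smul (G : ℝ) (m : Fin N → ℝ) (q : Config N) (lam : ℝ) :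
    potU G m (lam • q) = |lam|⁻¹ * potU G m q := by
  simp only [potU, Pi.smul_apply, ← smul_sub, norm_smul, Real.norm_eq_abs]
  rw [mul_left_comm]
  congr 1
  rw [Finset.mul_sum]
  refine Finset.sum_congr rfl fun a _ => ?_
  rw [Finset.mul_sum]
  refine Finset.sum_congr rfl fun b _ => ?_
  split_ifs
  · rw [div_eq_mul_inv, div_eq_mul_inv, mul_inv]
    ring
  · rw [mul_zero]

theorem potU_pos (hN : 2 ≤ N) (hG : 0 < G) (hm : ∀ a, 0 < m a) {q : Config N}
    (hq : CollisionFree q) : 0 < potU G m q := by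
  let a₀ : Fin N := ⟨0, by omega⟩
  let a₁ : Fin N := ⟨1, by omega⟩
  have h01 : a₀ < a₁ := Fin.mk_lt_mk.2 one_pos
  have hterm : ∀ a b : Fin N, 0 ≤ if a < b then m a * m b / ‖q a - q b‖ else 0 := by
    intro a b
    split_ifs
    · exact div_nonneg (mul_nonneg (hm a).le (hm b).le) (norm_nonneg _)
    · exact le_rfl
  refine mul_pos hG (Finset.sum_pos' (fun a _ => Finset.sum_nonneg fun b _ => hterm a b)
    ⟨a₀, mem_univ _, Finset.sum_pos' (fun b _ => hterm _ b) ⟨a₁, mem_univ _, ?_⟩⟩)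
  rw [if_pos h01]
  exact div_pos (mul_pos (hm a₀) (hm a₁)) (norm_pos_iff.2 (sub_ne_zero.2 (hq _ _ h01.ne)))

theorem continuousAt_potU {q : Config N} (hq : CollisionFree q) :
    ContinuousAt (potU G m) q := by
  refine continuousAt_const.mul (tendsto_finsetSum _ fun a _ => tendsto_finsetSum _ fun b _ => ?_)
  split_ifs with hab
  · exact continuousAt_const.div (by fun_prop) (norm_ne_zero_iff.2 (sub_ne_zero.2 (hq a b hab.ne)))
  · exact continuousAt_const

theorem le_potU_smul {h lam : ℝ} {q : Config N} (hlam : 0 < lam) (hq : lam * h ≤ potU G m q) :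
    h ≤ potU G m (lam • q) := by
  rwa [potU_smul, abs_of_pos hlam, le_inv_mul_iff₀ hlam]

theorem exists_potU_bounds_of_isCompact {X : Type*} [TopologicalSpace X] {K : Set X}
    {c : X → Config N} (hN : 2 ≤ N) (hG : 0 < G) (hm : ∀ a, 0 < m a) (hK : IsCompact K)
    (hc : ContinuousOn c K) (hcf : ∀ x ∈ K, CollisionFree (c x)) :
    ∃ Umin > 0, ∃ Umax, ∀ x ∈ K, Umin ≤ potU G m (c x) ∧ potU G m (c x) ≤ Umax := by
  have hUc : ContinuousOn (fun x => potU G m (c x)) K := fun x hx =>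
    (continuousAt_potU (hcf x hx)).comp_continuousWithinAt (hc x hx)
  obtain ⟨Umin, hUmin, hUmin_le⟩ :=
    hK.exists_forall_le' hUc fun x hx => potU_pos hN hG hm (hcf x hx)
  obtain ⟨Umax, hUmax⟩ := hK.bddAbove_image hUc
  exact ⟨Umin, hUmin, Umax, fun x hx => ⟨hUmin_le x hx, hUmax (mem_image_of_mem _ hx)⟩⟩

theorem ContDiffOn.exists_norm_deriv_le {E : Type*} [NormedAddCommGroup E] [NormedSpace ℝ E]
    {f : ℝ → E} {a b : ℝ} (hf : ContDiffOn ℝ 1 f (Icc a b)) (hab : a < b) :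
    ∃ B, ∀ x ∈ Ioo a b, ‖deriv f x‖ ≤ B := by
  obtain ⟨B, hB⟩ := isCompact_Icc.exists_bound_of_continuousOn
    (hf.continuousOn_derivWithin (uniqueDiffOn_Icc hab) le_rfl)
  refine ⟨B, fun x hx => ?_⟩
  rw [← derivWithin_of_mem_nhds (Icc_mem_nhds hx.1 hx.2)]
  exact hB x (Ioo_subset_Icc_self hx)

theorem sum_mul_norm_deriv_apply_sq_le (hm : ∀ a, 0 ≤ m a) {c : ℝ → Config N} {x B : ℝ}
    (hc : DifferentiableAt ℝ c x) (hB : ‖deriv c x‖ ≤ B) :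
    ∑ a, m a * ‖deriv (fun u => c u a) x‖ ^ 2 ≤ ∑ a, m a * B ^ 2 := by
  refine Finset.sum_le_sum fun a _ => mul_le_mul_of_nonneg_left ?_ (hm a)
  rw [(hasDerivAt_pi.1 hc.hasDerivAt a).deriv]
  exact pow_le_pow_left₀ (norm_nonneg _) ((norm_le_pi_norm _ a).trans hB) 2

theorem deriv_apply_const_smul (lam : ℝ) (γ : ℝ → Config N) (s : ℝ) :
    (fun a => deriv (fun u => (lam • γ u) a) s) = lam • fun a => deriv (fun u => γ u a) s :=
  funext fun _ => deriv_fun_const_smul_field lam _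

def jmNorm (G : ℝ) (m : Fin N → ℝ) (h : ℝ) (q v : Config N) : ℝ :=
  √(2 * (potU G m q - h)) * √(∑ a, m a * ‖v a‖ ^ 2)

theorem jmNorm_nonneg (G : ℝ) (m : Fin N → ℝ) (h : ℝ) (q v : Config N) :
    0 ≤ jmNorm G m h q v :=
  mul_nonneg (Real.sqrt_nonneg _) (Real.sqrt_nonneg _)

theorem jmNorm_smul_le {h lam U K : ℝ} {q v : Config N} (hlam : 0 < lam) (hh : 0 ≤ h)
    (hU₀ : 0 ≤ U) (hU : potU G m q ≤ U) (hK : ∑ a, m a * ‖v a‖ ^ 2 ≤ K) :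
    jmNorm G m h (lam • q) (lam • v) ≤ √(2 * U * K) * √lam := by
  have hpot : 2 * (potU G m (lam • q) - h) ≤ 2 * lam⁻¹ * U := by
    rw [potU_smul, abs_of_pos hlam]
    nlinarith [inv_pos.2 hlam]
  have hkin : ∑ a, m a * ‖(lam • v) a‖ ^ 2 ≤ lam ^ 2 * K := by
    have hscale : ∑ a, m a * ‖(lam • v) a‖ ^ 2 = lam ^ 2 * ∑ a, m a * ‖v a‖ ^ 2 := by
      simp only [Pi.smul_apply, norm_smul, Real.norm_eq_abs, mul_pow, sq_abs, Finset.mul_sum]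
      exact Finset.sum_congr rfl fun a _ => by ring
    exact hscale ▸ mul_le_mul_of_nonneg_left hK (sq_nonneg lam)
  calc jmNorm G m h (lam • q) (lam • v) ≤ √(2 * lam⁻¹ * U) * √(lam ^ 2 * K) :=
        mul_le_mul (Real.sqrt_le_sqrt hpot) (Real.sqrt_le_sqrt hkin) (Real.sqrt_nonneg _)
          (Real.sqrt_nonneg _)
    _ = √(2 * U * K * lam) := by
        rw [← Real.sqrt_mul (by positivity)]
        congr 1
        field_simp
    _ = √(2 * U * K) * √lam := Real.sqrt_mul' _ hlam.le

theorem JMlength_le_of_jmNorm_le {h M : ℝ} {γ : ℝ → Config N}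
    (hM : ∀ s ∈ Ioo (0 : ℝ) 1,
      jmNorm G m h (γ s) (fun a => deriv (fun u => γ u a) s) ≤ M) :
    JMlength G m h γ ≤ M := by
  have hnorm := intervalIntegral.norm_integral_le_of_norm_le_const_ae (a := 0) (b := 1)
    (f := fun s => jmNorm G m h (γ s) (fun a => deriv (fun u => γ u a) s)) (C := M) (by
      filter_upwards [MeasureTheory.volume.ae_ne 1] with s hs1 hs
      rw [uIoc_of_le zero_le_one] at hs
      rw [Real.norm_of_nonneg (jmNorm_nonneg _ _ _ _ _)]
      exact hM s ⟨hs.1, lt_of_le_of_ne hs.2 hs1⟩)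
  calc JMlength G m h γ ≤ |JMlength G m h γ| := le_abs_self _
    _ ≤ M * |1 - 0| := hnorm
    _ = M := by norm_num

end

theorem shrinking_loops_JM_length_general
    (N : ℕ) (hN : 2 ≤ N) (G : ℝ) (hG : 0 < G)
    (m : Fin N → ℝ) (hm : ∀ a, 0 < m a)
    (h : ℝ) (hh : 0 < h)
    (c : ℝ → Config N) (hc : ContDiffOn ℝ 1 c (Set.Icc 0 1))
    (hcf : ∀ s ∈ Set.Icc (0:ℝ) 1, CollisionFree (c s)) :
    ∃ C > (0:ℝ), ∃ lam₀ ∈ Set.Ioc (0:ℝ) 1, ∀ lam ∈ Set.Ioc (0:ℝ) lam₀,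
      (∀ s ∈ Set.Icc (0:ℝ) 1,
        CollisionFree (lam • c s) ∧ h ≤ potU G m (lam • c s)) ∧
      JMlength G m h (fun s => lam • c s) ≤ C * Real.sqrt lam := by
  obtain ⟨Umin, hUmin, Umax, hU⟩ :=
    exists_potU_bounds_of_isCompact hN hG hm isCompact_Icc hc.continuousOn hcf
  have h₀ : (0 : ℝ) ∈ Set.Icc 0 1 := left_mem_Icc.2 zero_le_one
  have hUmax₀ : 0 ≤ Umax := hUmin.le.trans ((hU 0 h₀).1.trans (hU 0 h₀).2)
  obtain ⟨B, hB⟩ := hc.exists_norm_deriv_le zero_lt_one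
  refine ⟨√(2 * Umax * ∑ a, m a * B ^ 2) + 1, by positivity, min 1 (Umin / h),
    ⟨by positivity, min_le_left _ _⟩, fun lam hlam =>
      ⟨fun s hs => ⟨(hcf s hs).smul hlam.1.ne', le_potU_smul hlam.1 ?_⟩, ?_⟩⟩
  · exact ((le_div_iff₀ hh).1 (hlam.2.trans (min_le_right _ _))).trans (hU s hs).1
  · refine JMlength_le_of_jmNorm_le fun s hs => ?_
    have hdiff : DifferentiableAt ℝ c s :=
      (hc.differentiableOn one_ne_zero s (Ioo_subset_Icc_self hs)).differentiableAt
        (Icc_mem_nhds hs.1 hs.2)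
    rw [deriv_apply_const_smul]
    calc _ ≤ √(2 * Umax * ∑ a, m a * B ^ 2) * √lam :=
          jmNorm_smul_le hlam.1 hh.le hUmax₀ (hU s (Ioo_subset_Icc_self hs)).2
            (sum_mul_norm_deriv_apply_sq_le (fun a => (hm a).le) hdiff (hB s hs))
      _ ≤ _ := by gcongr; exact le_add_of_nonneg_right zero_le_one

/-- shrinking loops have shrinking JM length: for a `C¹`
collision-free closed curve `c`, there are `C > 0` and `λ₀ ∈ (0,1]` such that
for all `λ ∈ (0,λ₀]` the rescaled curve `λc` lies in the collision-free Hill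
region `{U ≥ h}` and `L_h(λc) ≤ C √λ`. -/
theorem shrinking_loops_JM_length
    (N : ℕ) (hN : 2 ≤ N) (G : ℝ) (hG : 0 < G)
    (m : Fin N → ℝ) (hm : ∀ a, 0 < m a)
    (h : ℝ) (hh : 0 < h)
    (c : ℝ → Config N) (hc : ContDiffOn ℝ 1 c (Set.Icc 0 1))
    (hclosed : c 0 = c 1)
    (hcf : ∀ s ∈ Set.Icc (0:ℝ) 1, CollisionFree (c s)) :
    ∃ C > (0:ℝ), ∃ lam₀ ∈ Set.Ioc (0:ℝ) 1, ∀ lam ∈ Set.Ioc (0:ℝ) lam₀,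
      (∀ s ∈ Set.Icc (0:ℝ) 1,
        CollisionFree (lam • c s) ∧ h ≤ potU G m (lam • c s)) ∧
      JMlength G m h (fun s => lam • c s) ≤ C * Real.sqrt lam :=
  shrinking_loops_JM_length_general N hN G hG m hm h hh c hc hcf
end
end
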